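/- arXiv:2302.12409 — 3 statements merged into one kernel-verified Lean document; each statement's English description precedes it below -/
import Mathlib

section
/- Let 1 ≤ k ≤ n and let λ = (λ_1,…,λ_n) ∈ Γ_k with λ_1 ≥ λ_2 ≥ ⋯ ≥ λ_n. If λ_i ≤ 0 for some index i, then −λ_i ≤ ((n−k)/k) λ_1. -/
open Finset Polynomial

namespace NLH
set_option linter.unusedSectionVars false

variable {α : Type*} [DecidableEq α]

noncomputable def eS (f : α → ℝ) (S : Finset α) (j : ℕ) : ℝ :=
  ∑ t ∈ S.powersetCard j, ∏ i ∈ t, f i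

lemma eS_zero (f : α → ℝ) (S : Finset α) : eS f S 0 = 1 := by simp [eS]

lemma eS_of_lt (f : α → ℝ) {S : Finset α} {j : ℕ} (h : S.card < j) : eS f S j = 0 := by
  simp [eS, Finset.powersetCard_eq_empty.2 h]

lemma eS_one (f : α → ℝ) (S : Finset α) : eS f S 1 = ∑ i ∈ S, f i := by
  rw [eS, Finset.powersetCard_one, Finset.sum_map]
  simp

lemma esymm_eq_eS (f : α → ℝ) (S : Finset α) (j : ℕ) :
    (S.val.map f).esymm j = eS f S j := Finset.esymm_map_val f S j


lemma eS_erase (f : α → ℝ) {S : Finset α} {i : α} (hi : i ∈ S) (j : ℕ) :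
    eS f S (j+1) = eS f (S.erase i) (j+1) + f i * eS f (S.erase i) j := by
  classical
  have h : i ∉ S.erase i := Finset.notMem_erase _ _
  have himg : ∑ t ∈ (Finset.powersetCard j (S.erase i)).image (insert i), ∏ x ∈ t, f x
      = f i * eS f (S.erase i) j := by
    rw [Finset.sum_image, eS, Finset.mul_sum]
    · refine Finset.sum_congr rfl fun t ht => ?_
      have hit : i ∉ t := fun hmem => h ((Finset.mem_powersetCard.1 ht).1 hmem)
      rw [Finset.prod_insert hit]
    · intro t ht u hu htu
      have hit : i ∉ t := fun hmem => h ((Finset.mem_powersetCard.1 ht).1 hmem)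
      have hiu : i ∉ u := fun hmem => h ((Finset.mem_powersetCard.1 hu).1 hmem)
      have : (insert i t).erase i = (insert i u).erase i := by rw [htu]
      rwa [Finset.erase_insert hit, Finset.erase_insert hiu] at this
  conv_lhs => rw [eS, ← Finset.insert_erase hi]
  rw [Finset.powersetCard_succ_insert h, Finset.sum_union, himg]
  · rfl
  · rw [Finset.disjoint_left]
    intro t ht htim
    obtain ⟨u, hu, rfl⟩ := Finset.mem_image.1 htim
    exact h ((Finset.mem_powersetCard.1 ht).1 (Finset.mem_insert_self i u))

lemma eS_compl (f : α → ℝ) {S : Finset α} {r : ℕ} (hr : r ≤ S.card) :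
    eS f S r = ∑ u ∈ S.powersetCard (S.card - r), ∏ i ∈ S \ u, f i := by
  refine Finset.sum_nbij' (i := fun t => S \ t) (j := fun u => S \ u) ?_ ?_ ?_ ?_ ?_
  · intro t ht
    obtain ⟨hts, htc⟩ := Finset.mem_powersetCard.1 ht
    exact Finset.mem_powersetCard.2 ⟨Finset.sdiff_subset, by rw [Finset.card_sdiff_of_subset hts, htc]⟩
  · intro u hu
    obtain ⟨hus, huc⟩ := Finset.mem_powersetCard.1 hu
    refine Finset.mem_powersetCard.2 ⟨Finset.sdiff_subset, ?_⟩
    rw [Finset.card_sdiff_of_subset hus, huc]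
    omega
  · intro t ht
    exact Finset.sdiff_sdiff_eq_self (Finset.mem_powersetCard.1 ht).1
  · intro u hu
    exact Finset.sdiff_sdiff_eq_self (Finset.mem_powersetCard.1 hu).1
  · intro t ht
    rw [Finset.sdiff_sdiff_eq_self (Finset.mem_powersetCard.1 ht).1]

lemma sum_prod_erase (f : α → ℝ) {S : Finset α} (hS : 1 ≤ S.card) :
    ∑ i ∈ S, ∏ x ∈ S.erase i, f x = eS f S (S.card - 1) := by
  rw [eS_compl f (Nat.sub_le _ _)]
  have h1 : S.card - (S.card - 1) = 1 := by omega
  rw [h1, Finset.powersetCard_one, Finset.sum_map]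
  refine Finset.sum_congr rfl fun a _ => ?_
  rw [Function.Embedding.coeFn_mk, Finset.sdiff_singleton_eq_erase]

/-- double counting -/

lemma sum_eS_erase (f : α → ℝ) (S : Finset α) (r : ℕ) :
    ∑ i ∈ S, eS f (S.erase i) r = ((S.card - r : ℕ) : ℝ) * eS f S r := by
  classical
  have RHS : ((S.card - r : ℕ) : ℝ) * eS f S r
      = ∑ p ∈ (S.powersetCard r).sigma (fun t => S \ t), ∏ x ∈ p.1, f x := by
    rw [Finset.sum_sigma, eS, Finset.mul_sum]
    refine Finset.sum_congr rfl fun t ht => ?_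
    obtain ⟨hts, htc⟩ := Finset.mem_powersetCard.1 ht
    dsimp only
    rw [Finset.sum_const, nsmul_eq_mul, Finset.card_sdiff_of_subset hts, htc]
  rw [RHS]
  simp only [eS]
  rw [Finset.sum_sigma']
  refine Finset.sum_nbij' (i := fun p => ⟨p.2, p.1⟩) (j := fun p => ⟨p.2, p.1⟩) ?_ ?_ ?_ ?_ ?_
  · rintro ⟨i, t⟩ hp
    obtain ⟨hi, ht⟩ := Finset.mem_sigma.1 hp
    obtain ⟨hts, htc⟩ := Finset.mem_powersetCard.1 ht
    refine Finset.mem_sigma.2 ⟨Finset.mem_powersetCard.2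
      ⟨hts.trans (Finset.erase_subset _ _), htc⟩, ?_⟩
    refine Finset.mem_sdiff.2 ⟨hi, fun hit => ?_⟩
    exact Finset.notMem_erase i S (hts hit)
  · rintro ⟨t, i⟩ hp
    obtain ⟨ht, hi⟩ := Finset.mem_sigma.1 hp
    obtain ⟨hts, htc⟩ := Finset.mem_powersetCard.1 ht
    obtain ⟨hiS, hit⟩ := Finset.mem_sdiff.1 hi
    refine Finset.mem_sigma.2 ⟨hiS, Finset.mem_powersetCard.2
      ⟨Finset.subset_erase.2 ⟨hts, hit⟩, htc⟩⟩
  · rintro ⟨i, t⟩ _; rfl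
  · rintro ⟨t, i⟩ _; rfl
  · rintro ⟨i, t⟩ _; rfl

lemma base_newton (f : α → ℝ) {S : Finset α} {m : ℕ} (hm : 2 ≤ m) (hcard : S.card = m) :
    2 * (m:ℝ) * (eS f S m * eS f S (m-2)) ≤ ((m:ℝ) - 1) * eS f S (m-1)^2 := by
  set P : α → ℝ := fun i => ∏ x ∈ S.erase i, f x with hP
  have h1 : eS f S m = ∏ x ∈ S, f x := by
    rw [eS, ← hcard, Finset.powersetCard_self, Finset.sum_singleton]
  have h2 : eS f S (m-1) = ∑ i ∈ S, P i := by
    have := sum_prod_erase f (S := S) (by omega)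
    rw [hcard] at this
    exact this.symm
  have h3 : ∀ i ∈ S, ∀ j ∈ S.erase i,
      P i * P j = (∏ x ∈ S, f x) * ∏ x ∈ (S.erase i).erase j, f x := by
    intro i hi j hj
    have hji : j ≠ i := Finset.ne_of_mem_erase hj
    have hjS : j ∈ S := Finset.mem_of_mem_erase hj
    have hiej : i ∈ S.erase j := Finset.mem_erase.2 ⟨hji.symm, hi⟩
    have e1 : P i = f j * ∏ x ∈ (S.erase i).erase j, f x :=
      (Finset.mul_prod_erase (S.erase i) f hj).symm
    have e2 : P j = f i * ∏ x ∈ (S.erase i).erase j, f x := by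
      rw [hP]
      dsimp only
      rw [← Finset.mul_prod_erase (S.erase j) f hiej, Finset.erase_right_comm]
    have e3 : ∏ x ∈ S, f x = f i * (f j * ∏ x ∈ (S.erase i).erase j, f x) := by
      rw [← e1, hP]
      dsimp only
      rw [Finset.mul_prod_erase S f hi]
    rw [e1, e2, e3]; ring
  have h4 : ∑ i ∈ S, ∑ j ∈ S.erase i, P i * P j = 2 * eS f S (m-2) * eS f S m := by
    have inner : ∀ i ∈ S, ∑ j ∈ S.erase i, P i * P j
        = (∏ x ∈ S, f x) * eS f (S.erase i) (m-2) := by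
      intro i hi
      rw [Finset.sum_congr rfl (h3 i hi), ← Finset.mul_sum]
      congr 1
      have hce : (S.erase i).card = m - 1 := by rw [Finset.card_erase_of_mem hi, hcard]
      have := sum_prod_erase f (S := S.erase i) (by omega)
      rw [hce] at this
      have h12 : m - 1 - 1 = m - 2 := by omega
      rw [h12] at this
      exact this
    rw [Finset.sum_congr rfl inner, ← Finset.mul_sum, sum_eS_erase, hcard]
    have : ((m - (m-2) : ℕ) : ℝ) = 2 := by
      have : m - (m-2) = 2 := by omega
      rw [this]; norm_num
    rw [this, h1]; ring
  have h5 : (∑ i ∈ S, P i)^2 = ∑ i ∈ S, P i^2 + ∑ i ∈ S, ∑ j ∈ S.erase i, P i * P j := by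
    rw [sq, Finset.sum_mul_sum, ← Finset.sum_add_distrib]
    refine Finset.sum_congr rfl fun i hi => ?_
    rw [← Finset.add_sum_erase _ _ hi, sq]
  have h6 : (∑ i ∈ S, P i)^2 ≤ (m:ℝ) * ∑ i ∈ S, P i^2 := by
    have := sq_sum_le_card_mul_sum_sq (s := S) (f := P)
    rwa [hcard] at this
  rw [h2]
  have key : 2 * eS f S (m-2) * eS f S m = (∑ i ∈ S, P i)^2 - ∑ i ∈ S, P i^2 := by
    rw [h5, ← h4]; ring
  nlinarith [h6]

lemma deriv_step (c : ℕ) (hc : 1 ≤ c) (s : Multiset ℝ) (hcard : Multiset.card s = c + 1) :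
    ∃ t : Multiset ℝ, Multiset.card t = c ∧
      ∀ j ≤ c, ((c:ℝ) + 1) * t.esymm j = ((c + 1 - j : ℕ) : ℝ) * s.esymm j := by
  classical
  set P : ℝ[X] := (s.map fun a => X + C a).prod with hPdef
  have hmap : (s.map fun a => X + C a) = (s.map fun a : ℝ => -a).map fun a => X - C a := by
    rw [Multiset.map_map]
    refine Multiset.map_congr rfl fun a _ => ?_
    simp [sub_neg_eq_add]
  have hProots : P.roots = s.map fun a : ℝ => -a := by
    rw [hPdef, hmap, Polynomial.roots_multiset_prod_X_sub_C]
  have hPmonic : P.Monic := by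
    apply Polynomial.monic_multiset_prod_of_monic
    intro q hq
    exact monic_X_add_C q
  have hPdeg : P.natDegree = c + 1 := by
    rw [hPdef, Polynomial.natDegree_multiset_prod_of_monic]
    · rw [Multiset.map_map]
      have : (s.map fun a : ℝ => ((X + C a : ℝ[X]).natDegree)) = s.map fun _ => 1 := by
        refine Multiset.map_congr rfl fun a _ => natDegree_X_add_C a
      erw [this]
      rw [Multiset.map_const', Multiset.sum_replicate, hcard, smul_eq_mul, mul_one]
    · intro q hq
      obtain ⟨b, _, rfl⟩ := Multiset.mem_map.1 hq
      exact monic_X_add_C b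
  set Q : ℝ[X] := derivative P with hQdef
  have hQdeg_le : Q.natDegree ≤ c := by
    have h := Polynomial.natDegree_derivative_le P
    rw [← hQdef, hPdeg] at h
    omega
  have hQroots_ge : c ≤ Multiset.card Q.roots := by
    have h1 := Polynomial.card_roots_le_derivative P
    rw [hProots, Multiset.card_map, hcard] at h1
    rw [← hQdef] at h1
    omega
  have hQroots_le : Multiset.card Q.roots ≤ Q.natDegree := Polynomial.card_roots' Q
  have hQroots : Multiset.card Q.roots = c := le_antisymm (hQroots_le.trans hQdeg_le) hQroots_ge
  have hQdeg : Q.natDegree = c := le_antisymm hQdeg_le (hQroots_ge.trans hQroots_le)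
  have hQcoeff : ∀ j ≤ c, Q.coeff (c - j) = ((c - j : ℕ) + 1 : ℝ) * s.esymm j := by
    intro j hj
    rw [hQdef, Polynomial.coeff_derivative]
    have h1 : c - j + 1 ≤ Multiset.card s := by omega
    have h2 : P.coeff (c - j + 1) = s.esymm (Multiset.card s - (c - j + 1)) := by
      rw [hPdef]
      exact Multiset.prod_X_add_C_coeff s h1
    have h3 : Multiset.card s - (c - j + 1) = j := by omega
    rw [h2, h3]
    ring
  have hlc : Q.leadingCoeff = (c : ℝ) + 1 := by
    rw [Polynomial.leadingCoeff, hQdeg]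
    have := hQcoeff 0 (Nat.zero_le c)
    rw [Nat.sub_zero] at this
    rw [this]
    simp [Multiset.esymm]
  have hfact : C Q.leadingCoeff * (Q.roots.map fun a => X - C a).prod = Q :=
    Polynomial.C_leadingCoeff_mul_prod_multiset_X_sub_C (by rw [hQroots, hQdeg])
  refine ⟨Q.roots.map fun a : ℝ => -a, by rw [Multiset.card_map, hQroots], ?_⟩
  intro j hj
  set t : Multiset ℝ := Q.roots.map fun a : ℝ => -a with htdef
  have htmap : (t.map fun a => X + C a) = Q.roots.map fun a => X - C a := by
    rw [htdef, Multiset.map_map]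
    refine Multiset.map_congr rfl fun a _ => ?_
    simp [sub_eq_add_neg]
  have htcard : Multiset.card t = c := by rw [htdef, Multiset.card_map, hQroots]
  have h4 : (t.map fun a => X + C a).prod.coeff (c - j) = t.esymm (Multiset.card t - (c - j)) :=
    Multiset.prod_X_add_C_coeff t (by omega)
  have h5 : Multiset.card t - (c - j) = j := by omega
  rw [h5] at h4
  have h6 : Q.coeff (c - j) = ((c:ℝ) + 1) * t.esymm j := by
    conv_lhs => rw [← hfact]
    rw [Polynomial.coeff_C_mul, ← htmap, h4, hlc]
  rw [← h6, hQcoeff j hj]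
  have : ((c + 1 - j : ℕ) : ℝ) = ((c - j : ℕ) + 1 : ℝ) := by
    have : c + 1 - j = (c - j) + 1 := by omega
    rw [this]; push_cast; ring
  rw [this]

lemma multiset_eq_map (s : Multiset ℝ) :
    ∃ (n : ℕ) (f : Fin n → ℝ), n = Multiset.card s ∧
      ∀ r, s.esymm r = eS f Finset.univ r := by
  refine ⟨s.toList.length, s.toList.get, by simp, fun r => ?_⟩
  rw [← esymm_eq_eS]
  congr 1
  have h1 : ((Finset.univ : Finset (Fin s.toList.length)).val : Multiset (Fin _)) =
      ↑(List.finRange s.toList.length) := rfl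
  rw [h1, Multiset.map_coe, ← List.ofFn_eq_map, List.ofFn_get, Multiset.coe_toList]

lemma two_choose (j : ℕ) : 2 * ((j+1).choose 2) = (j+1) * j := by
  rw [Nat.choose_two_right]
  have h : 2 ∣ (j+1) * j := by
    rcases Nat.even_or_odd j with h | h
    · exact Dvd.dvd.mul_left h.two_dvd _
    · exact Dvd.dvd.mul_right h.add_one.two_dvd _
  rw [Nat.succ_sub_one, Nat.mul_div_cancel' h]

theorem newton (d : ℕ) : ∀ (j : ℕ), 1 ≤ j → ∀ s : Multiset ℝ, Multiset.card s = j + 1 + d →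
    s.esymm (j+1) * s.esymm (j-1) * (((j+1+d).choose j : ℕ) : ℝ)^2 ≤
      s.esymm j ^ 2 * ((((j+1+d).choose (j+1) : ℕ) : ℝ) * (((j+1+d).choose (j-1) : ℕ) : ℝ)) := by
  induction d with
  | zero =>
    intro j hj s hcard
    obtain ⟨n, f, hn, hE⟩ := multiset_eq_map s
    have hcu : (Finset.univ : Finset (Fin n)).card = j + 1 := by
      rw [Finset.card_univ, Fintype.card_fin, hn, hcard]
    have hb := base_newton f (by omega : 2 ≤ j + 1) hcu
    have hj1 : j + 1 - 2 = j - 1 := by omega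
    have hj2 : j + 1 - 1 = j := by omega
    rw [hj1, hj2] at hb
    rw [hE (j+1), hE (j-1), hE j]
    have hc1 : (j+1+0).choose j = j + 1 := by
      simp [Nat.choose_succ_self_right]
    have hc2 : (j+1+0).choose (j+1) = 1 := by simp
    have hc3 : 2 * ((j+1+0).choose (j-1)) = (j+1) * j := by
      have : (j+1).choose (j-1) = (j+1).choose 2 := by
        rw [← Nat.choose_symm (by omega : j - 1 ≤ j + 1)]
        congr 1
        omega
      simpa [this] using two_choose j
    rw [hc1, hc2]
    have hc3' : ((j+1+0).choose (j-1) : ℝ) = ((j:ℝ)+1) * j / 2 := by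
      have := congrArg (fun x : ℕ => (x : ℝ)) hc3
      push_cast at this
      linarith
    rw [hc3']
    push_cast at hb ⊢
    nlinarith [mul_le_mul_of_nonneg_left hb (show (0:ℝ) ≤ ((j:ℝ)+1)/2 by positivity)]
  | succ d ih =>
    intro j hj s hcard
    set c : ℕ := j + 1 + d with hc
    obtain ⟨t, htcard, hrel⟩ := deriv_step c (by omega) s (by omega)
    have IH := ih j hj t (by omega)
    set M : ℝ := (c : ℝ) + 1 with hM
    have hMpos : (0:ℝ) < M := by positivity
    -- esymm relations
    have r1 : t.esymm (j+1) = ((d:ℝ)+1) * s.esymm (j+1) / M := by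
      have h := hrel (j+1) (by omega)
      have : ((c + 1 - (j+1) : ℕ) : ℝ) = (d:ℝ)+1 := by
        have : c + 1 - (j+1) = d + 1 := by omega
        rw [this]; push_cast; ring
      rw [this] at h
      field_simp
      linarith
    have r2 : t.esymm (j-1) = ((d:ℝ)+3) * s.esymm (j-1) / M := by
      have h := hrel (j-1) (by omega)
      have : ((c + 1 - (j-1) : ℕ) : ℝ) = (d:ℝ)+3 := by
        have : c + 1 - (j-1) = d + 3 := by omega
        rw [this]; push_cast; ring
      rw [this] at h
      field_simp
      linarith
    have r3 : t.esymm j = ((d:ℝ)+2) * s.esymm j / M := by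
      have h := hrel j (by omega)
      have : ((c + 1 - j : ℕ) : ℝ) = (d:ℝ)+2 := by
        have : c + 1 - j = d + 2 := by omega
        rw [this]; push_cast; ring
      rw [this] at h
      field_simp
      linarith
    -- choose relations
    have ch : ∀ i : ℕ, i ≤ c → (c.choose i : ℝ) = ((c+1).choose i : ℝ) * ((c+1-i : ℕ) : ℝ) / M := by
      intro i hi
      have h := Nat.choose_mul_succ_eq c i
      have h' : ((c.choose i : ℕ) : ℝ) * ((c:ℝ)+1) = ((c+1).choose i : ℝ) * ((c+1-i : ℕ) : ℝ) := by
        exact_mod_cast congrArg (fun x : ℕ => (x:ℝ)) h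
      rw [← hM] at h'
      field_simp
      linarith
    have c1 : (c.choose j : ℝ) = ((c+1).choose j : ℝ) * ((d:ℝ)+2) / M := by
      have := ch j (by omega)
      have h2 : ((c + 1 - j : ℕ) : ℝ) = (d:ℝ)+2 := by
        have : c + 1 - j = d + 2 := by omega
        rw [this]; push_cast; ring
      rwa [h2] at this
    have c2 : (c.choose (j+1) : ℝ) = ((c+1).choose (j+1) : ℝ) * ((d:ℝ)+1) / M := by
      have := ch (j+1) (by omega)
      have h2 : ((c + 1 - (j+1) : ℕ) : ℝ) = (d:ℝ)+1 := by
        have : c + 1 - (j+1) = d + 1 := by omega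
        rw [this]; push_cast; ring
      rwa [h2] at this
    have c3 : (c.choose (j-1) : ℝ) = ((c+1).choose (j-1) : ℝ) * ((d:ℝ)+3) / M := by
      have := ch (j-1) (by omega)
      have h2 : ((c + 1 - (j-1) : ℕ) : ℝ) = (d:ℝ)+3 := by
        have : c + 1 - (j-1) = d + 3 := by omega
        rw [this]; push_cast; ring
    -- rewrite IH
      rwa [h2] at this
    rw [r1, r2, r3, c1, c2, c3] at IH
    have hcc : j + 1 + (d+1) = c + 1 := by omega
    rw [hcc]
    set A := s.esymm (j+1) * s.esymm (j-1) * (((c+1).choose j : ℕ) : ℝ)^2 with hA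
    set B := s.esymm j ^ 2 * ((((c+1).choose (j+1) : ℕ) : ℝ) * (((c+1).choose (j-1) : ℕ) : ℝ)) with hB
    have hK : (0:ℝ) < ((d:ℝ)+1) * ((d:ℝ)+3) * ((d:ℝ)+2)^2 := by positivity
    have hL : ((d:ℝ)+1) * ((d:ℝ)+3) * ((d:ℝ)+2)^2 * A / M^4
        ≤ ((d:ℝ)+1) * ((d:ℝ)+3) * ((d:ℝ)+2)^2 * B / M^4 := by
      calc ((d:ℝ)+1) * ((d:ℝ)+3) * ((d:ℝ)+2)^2 * A / M^4
          = ((d:ℝ)+1) * s.esymm (j+1) / M * (((d:ℝ)+3) * s.esymm (j-1) / M)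
            * (((c+1).choose j : ℝ) * ((d:ℝ)+2) / M)^2 := by rw [hA]; field_simp
        _ ≤ (((d:ℝ)+2) * s.esymm j / M)^2
            * (((c+1).choose (j+1) : ℝ) * ((d:ℝ)+1) / M * (((c+1).choose (j-1) : ℝ) * ((d:ℝ)+3) / M)) := IH
        _ = ((d:ℝ)+1) * ((d:ℝ)+3) * ((d:ℝ)+2)^2 * B / M^4 := by rw [hB]; field_simp
    have hAB : ((d:ℝ)+1) * ((d:ℝ)+3) * ((d:ℝ)+2)^2 * A
        ≤ ((d:ℝ)+1) * ((d:ℝ)+3) * ((d:ℝ)+2)^2 * B := by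
      have hM4 : (0:ℝ) < M^4 := by positivity
      exact (div_le_div_iff_of_pos_right hM4).mp hL
    exact le_of_mul_le_mul_left hAB hK

end NLH


/-- `esymmOn S m lam` is the m-th elementary symmetric polynomial of the
components of `lam` with indices in `S` (zero for `m < 0`, and automatically
zero for `m > |S|`). For `S = {i}ᶜ` this is `σ_m(λ|i)`, etc. -/
noncomputable def esymmOn {n : ℕ} (S : Finset (Fin n)) (m : ℤ) (lam : Fin n → ℝ) : ℝ :=
  if m < 0 then 0 else ∑ s ∈ S.powersetCard m.toNat, ∏ i ∈ s, lam i

/-- `σ_m(λ)` for the full vector. -/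
noncomputable def esymm {n : ℕ} (m : ℤ) (lam : Fin n → ℝ) : ℝ :=
  esymmOn Finset.univ m lam

/-- Garding's cone `Γ_k`. -/
def GammaCone {n : ℕ} (k : ℕ) (lam : Fin n → ℝ) : Prop :=
  ∀ j : ℕ, 1 ≤ j → j ≤ k → 0 < esymm (j : ℤ) lam

theorem neg_lambda_le {n : ℕ} (k : ℕ) (hk1 : 1 ≤ k) (hkn : k ≤ n)
    (lam : Fin n → ℝ) (hG : GammaCone k lam) (hsort : Antitone lam)
    (i : Fin n) (hi : lam i ≤ 0) :
    -lam i ≤ ((n : ℝ) - k) / k * lam ⟨0, by omega⟩ := by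
  classical
  have hn : 1 ≤ n := le_trans hk1 hkn
  set zero : Fin n := ⟨0, by omega⟩ with hzero
  set p : Fin n := ⟨n-1, by omega⟩ with hp
  -- bridge
  have bridge : ∀ j : ℕ, esymm (j : ℤ) lam = NLH.eS lam Finset.univ j := by
    intro j
    rw [esymm, esymmOn, NLH.eS]
    simp
  have hσ : ∀ j : ℕ, 1 ≤ j → j ≤ k → 0 < NLH.eS lam Finset.univ j := by
    intro j h1 h2
    rw [← bridge]
    exact hG j h1 h2
  -- lam zero is max, positive
  have hmax : ∀ q : Fin n, lam q ≤ lam zero := fun q => hsort (by simp [hzero, Fin.le_def])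
  have hlam0 : 0 < lam zero := by
    have h1 := hσ 1 le_rfl hk1
    rw [NLH.eS_one] at h1
    by_contra hc
    push_neg at hc
    have : ∑ q ∈ Finset.univ, lam q ≤ 0 := by
      refine Finset.sum_nonpos fun q _ => (hmax q).trans hc
    linarith
  have hip : lam p ≤ lam i := hsort (by simp [hp, Fin.le_def]; omega)
  have hRHSnn : 0 ≤ ((n : ℝ) - k) / k * lam zero := by
    apply mul_nonneg
    · apply div_nonneg _ (by positivity)
      have : (k:ℝ) ≤ (n:ℝ) := by exact_mod_cast hkn
      linarith
    · exact hlam0.le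
  rcases eq_or_lt_of_le (hip.trans hi) with hp0 | hpneg
  · -- lam p = 0
    have h2 : -lam i ≤ 0 := by rw [← hp0]; linarith
    linarith
  · -- main case : lam p < 0
    set S : Finset (Fin n) := Finset.univ.erase p with hS
    have hScard : S.card = n - 1 := by
      rw [hS, Finset.card_erase_of_mem (Finset.mem_univ p), Finset.card_univ, Fintype.card_fin]
    set m : ℕ := n - 1 with hm
    have split : ∀ j : ℕ, NLH.eS lam Finset.univ (j+1)
        = NLH.eS lam S (j+1) + lam p * NLH.eS lam S j :=
      fun j => NLH.eS_erase lam (Finset.mem_univ p) j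
    have chain : ∀ j, j ≤ k → 0 < NLH.eS lam S j := by
      intro j
      induction j with
      | zero => intro _; rw [NLH.eS_zero]; norm_num
      | succ j ihj =>
        intro hjk
        have h1 := hσ (j+1) (by omega) hjk
        rw [split j] at h1
        have h2 := ihj (by omega)
        nlinarith
    have hkm : k ≤ m := by
      by_contra hc
      push_neg at hc
      have := NLH.eS_of_lt lam (show S.card < k by omega)
      have := chain k le_rfl
      linarith
    -- multiset
    set s : Multiset ℝ := S.val.map lam with hsdef
    have hscard : Multiset.card s = m := by rw [hsdef, Multiset.card_map, ← hScard]; rfl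
    have hesymm : ∀ j, s.esymm j = NLH.eS lam S j := fun j => NLH.esymm_eq_eS lam S j
    -- ratio chain
    have T : ∀ j, 1 ≤ j → j ≤ k →
        NLH.eS lam S j * (m.choose (j-1) : ℝ) * m ≤
          (m.choose j : ℝ) * NLH.eS lam S (j-1) * NLH.eS lam S 1 := by
      intro j
      induction j with
      | zero => omega
      | succ j ihj =>
        intro _ hjk
        rcases Nat.eq_zero_or_pos j with rfl | hj1
        · simp [NLH.eS_zero, Nat.choose_one_right]
          rw [mul_comm]
        · -- step : use newton at index j with d = m - (j+1)
          have hTj := ihj hj1 (by omega)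
          set d : ℕ := m - (j+1) with hd
          have hmd : j + 1 + d = m := by omega
          have N := NLH.newton d j hj1 s (by omega)
          rw [hmd] at N
          rw [hesymm, hesymm, hesymm] at N
          have hjj : j + 1 - 1 = j := by omega
          rw [hjj]
          set e0 := NLH.eS lam S (j-1) with he0
          set e1 := NLH.eS lam S j with he1
          set e2 := NLH.eS lam S (j+1) with he2
          set E1 := NLH.eS lam S 1 with hE1
          have pe0 : 0 < e0 := chain _ (by omega)
          have pe1 : 0 < e1 := chain _ (by omega)
          have pCj : 0 < (m.choose j : ℝ) := by
            exact_mod_cast Nat.choose_pos (by omega : j ≤ m)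
          refine le_of_mul_le_mul_right ?_ (mul_pos pe0 pCj)
          have hTj' : ((m.choose (j+1) : ℝ) * e1) * (e1 * (m.choose (j-1) : ℝ) * m)
              ≤ ((m.choose (j+1) : ℝ) * e1) * ((m.choose j : ℝ) * e0 * E1) := by
            apply mul_le_mul_of_nonneg_left hTj
            positivity
          have hN' : (m:ℝ) * (e2 * e0 * (m.choose j : ℝ)^2)
              ≤ (m:ℝ) * (e1^2 * ((m.choose (j+1) : ℝ) * (m.choose (j-1) : ℝ))) := by
            apply mul_le_mul_of_nonneg_left N
            positivity
          calc e2 * (m.choose j : ℝ) * (m:ℝ) * (e0 * (m.choose j : ℝ))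
              = (m:ℝ) * (e2 * e0 * (m.choose j : ℝ)^2) := by ring
            _ ≤ (m:ℝ) * (e1^2 * ((m.choose (j+1) : ℝ) * (m.choose (j-1) : ℝ))) := hN'
            _ = ((m.choose (j+1) : ℝ) * e1) * (e1 * (m.choose (j-1) : ℝ) * m) := by ring
            _ ≤ ((m.choose (j+1) : ℝ) * e1) * ((m.choose j : ℝ) * e0 * E1) := hTj'
            _ = (m.choose (j+1) : ℝ) * e0 * E1 * (e1 * (m.choose j : ℝ)) := by ring
            _ = (m.choose (j+1) : ℝ) * e1 * E1 * (e0 * (m.choose j : ℝ)) := by ring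
    -- final assembly
    have Tk := T k hk1 le_rfl
    set ek := NLH.eS lam S k with hek
    set ekm := NLH.eS lam S (k-1) with hekm
    set Cm := (m.choose (k-1) : ℝ) with hCm
    set Ck := (m.choose k : ℝ) with hCk
    have pek : 0 < ek := chain k le_rfl
    have pekm : 0 < ekm := chain (k-1) (by omega)
    have pCm : 0 < Cm := by
      rw [hCm]; exact_mod_cast Nat.choose_pos (by omega : k - 1 ≤ m)
    have pCk : 0 < Ck := by
      rw [hCk]; exact_mod_cast Nat.choose_pos hkm
    have hE1b : NLH.eS lam S 1 ≤ (m:ℝ) * lam zero := by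
      rw [NLH.eS_one]
      calc ∑ q ∈ S, lam q ≤ ∑ q ∈ S, lam zero := Finset.sum_le_sum fun q _ => hmax q
        _ = (S.card : ℝ) * lam zero := by rw [Finset.sum_const, nsmul_eq_mul]
        _ = (m:ℝ) * lam zero := by rw [hScard]
    have hmpos : (0:ℝ) < (m:ℝ) := by
      have : 1 ≤ m := le_trans hk1 hkm
      exact_mod_cast by omega
    have step2 : ek * Cm ≤ Ck * ekm * lam zero := by
      have h1 : ek * Cm * (m:ℝ) ≤ Ck * ekm * ((m:ℝ) * lam zero) := by
        refine Tk.trans ?_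
        rw [mul_assoc, mul_assoc]
        apply mul_le_mul_of_nonneg_left _ pCk.le
        exact mul_le_mul_of_nonneg_left hE1b pekm.le
      have h2 : ek * Cm * (m:ℝ) ≤ (Ck * ekm * lam zero) * (m:ℝ) := by
        calc ek * Cm * (m:ℝ) ≤ Ck * ekm * ((m:ℝ) * lam zero) := h1
          _ = (Ck * ekm * lam zero) * (m:ℝ) := by ring
      exact le_of_mul_le_mul_right h2 hmpos
    -- split sigma_k
    have hsplitk : 0 < ek + lam p * ekm := by
      have h1 := hσ k hk1 le_rfl
      have h2 := split (k-1)
      have hkk : k - 1 + 1 = k := by omega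
      rw [hkk] at h2
      rw [h2] at h1
      exact h1
    have neg1 : (-lam p) * ekm < ek := by linarith
    -- choose identity
    have chid : (k:ℝ) * Ck = Cm * ((n:ℝ) - k) := by
      have h := Nat.choose_succ_right_eq m (k-1)
      have hkk : k - 1 + 1 = k := by omega
      rw [hkk] at h
      have hmk : m - (k-1) = n - k := by omega
      rw [hmk] at h
      have hcast : ((m.choose k * k : ℕ) : ℝ) = ((m.choose (k-1) * (n-k) : ℕ) : ℝ) := by
        exact_mod_cast congrArg (fun x : ℕ => (x:ℝ)) h
      push_cast at hcast
      have hnk : ((n:ℕ) : ℝ) - (k:ℝ) = ((n - k : ℕ) : ℝ) := by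
        rw [Nat.cast_sub hkn]
      rw [hCk, hCm, hnk]
      linarith [hcast]
    have key : (-lam p) * (k:ℝ) < ((n:ℝ) - k) * lam zero := by
      have h1 : (-lam p) * (k:ℝ) * (ekm * Cm) < ((n:ℝ) - k) * lam zero * (ekm * Cm) := by
        have hkpos : (0:ℝ) < (k:ℝ) := by exact_mod_cast hk1
        calc (-lam p) * (k:ℝ) * (ekm * Cm) = (k:ℝ) * ((-lam p) * ekm) * Cm := by ring
          _ < (k:ℝ) * ek * Cm := by
              apply mul_lt_mul_of_pos_right _ pCm
              exact mul_lt_mul_of_pos_left neg1 hkpos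
          _ ≤ (k:ℝ) * (Ck * ekm * lam zero) := by
              rw [mul_assoc]
              apply mul_le_mul_of_nonneg_left _ hkpos.le
              calc ek * Cm ≤ Ck * ekm * lam zero := step2
                _ = Ck * ekm * lam zero := rfl
          _ = ((k:ℝ) * Ck) * (ekm * lam zero) := by ring
          _ = (Cm * ((n:ℝ) - k)) * (ekm * lam zero) := by rw [chid]
          _ = ((n:ℝ) - k) * lam zero * (ekm * Cm) := by ring
      exact lt_of_mul_lt_mul_right h1 (by positivity)
    have hkpos : (0:ℝ) < (k:ℝ) := by exact_mod_cast hk1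
    have final : -lam p < ((n:ℝ) - k) / k * lam zero := by
      rw [div_mul_eq_mul_div, lt_div_iff₀ hkpos]
      linarith [key]
    linarith [hip]
end

section
/- Let 1 ≤ l < k ≤ n and let λ = (λ_1,…,λ_n) ∈ Γ_k with λ_1 ≥ λ_2 ≥ ⋯ ≥ λ_n. Then σ_l(λ) ≥ λ_1 λ_2 ⋯ λ_l. -/
open Finset

/-!
If `λ ∈ Γ_k` and `a` is an entry of `λ`, the remaining entries `λ'` lie in `Γ_{k-1}`: inductively
in `j`, `σ_j(λ) = σ_j(λ') + a σ_{j-1}(λ')` together with Newton's inequality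
`σ_{j-1}(λ') σ_{j+1}(λ') ≤ σ_j(λ')²` forces `σ_j(λ') > 0`. The largest entry `λ_1` is positive
because `σ_1(λ) > 0`, and removing it gives
`σ_l(λ) = σ_l(λ') + λ_1 σ_{l-1}(λ') ≥ λ_1 σ_{l-1}(λ')`, as `σ_l(λ') > 0` for `l ≤ k - 1`;
induct on `l`.

Newton's inequality is the classical real-rootedness argument: by Rolle, differentiating
`∏ (X + a)` and the reversed polynomial `∏ (a X + 1)` keeps all roots real, and suitable
derivatives isolate `σ_r, σ_{r+1}, σ_{r+2}` as the coefficients of a real-rooted quadratic,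
whose discriminant is nonnegative.
-/

open scoped Nat
open Polynomial

theorem Nat.add_one_descFactorial_self (n : ℕ) : (n + 1).descFactorial n = (n + 1) * n ! := by
  have h := Nat.factorial_mul_descFactorial (Nat.le_add_right n 1)
  rwa [Nat.add_sub_cancel_left, Nat.factorial_one, one_mul, Nat.factorial_succ] at h

theorem Nat.two_mul_add_two_descFactorial_self (n : ℕ) :
    2 * (n + 2).descFactorial n = (n + 2) * (n + 1) * n ! := by
  have h := Nat.factorial_mul_descFactorial (Nat.le_add_right n 2)
  rwa [Nat.add_sub_cancel_left, Nat.factorial_two, Nat.factorial_succ, Nat.factorial_succ,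
    ← mul_assoc] at h

namespace Multiset

section CommSemiring

variable {R : Type*} [CommSemiring R]

theorem esymm_cons_succ (a : R) (s : Multiset R) (j : ℕ) :
    (a ::ₘ s).esymm (j + 1) = s.esymm (j + 1) + a * s.esymm j := by
  simp only [Multiset.esymm, powersetCard_cons, Multiset.map_add, Multiset.sum_add,
    Multiset.map_map]
  rw [← Multiset.sum_map_mul_left]
  congr 2
  exact Multiset.map_congr rfl fun t _ => Multiset.prod_cons a t

theorem esymm_eq_zero_of_card_lt {s : Multiset R} {j : ℕ} (h : card s < j) : s.esymm j = 0 := by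
  simp [Multiset.esymm, powersetCard_eq_empty _ h]

theorem esymm_one_eq_sum (s : Multiset R) : s.esymm 1 = s.sum := by
  simp [Multiset.esymm, Multiset.powersetCard_one]

theorem prod_C_mul_X_add_one_coeff (s : Multiset R) (k : ℕ) :
    ((s.map fun a => C a * X + 1).prod).coeff k = s.esymm k := by
  induction s using Multiset.induction_on generalizing k with
  | empty =>
    cases k with
    | zero => simp [Multiset.esymm]
    | succ j => simp [coeff_one, esymm_eq_zero_of_card_lt (s := (0 : Multiset R)) j.succ_pos]
  | cons a s ih =>
    rw [Multiset.map_cons, Multiset.prod_cons, add_mul, one_mul, mul_assoc, coeff_add, coeff_C_mul]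
    cases k with
    | zero => simp [ih, Multiset.esymm]
    | succ j => rw [coeff_X_mul, ih, ih, esymm_cons_succ]; ring

end CommSemiring

end Multiset

namespace Polynomial

theorem Splits.derivative {p : ℝ[X]} (hp : p.Splits) : p.derivative.Splits := by
  by_cases hp0 : p.natDegree = 0
  · rw [derivative_of_natDegree_zero hp0]
    exact Splits.zero
  rw [splits_iff_card_roots]
  have hroots := p.card_roots_le_derivative
  have hcard := p.derivative.card_roots'
  have hdeg := natDegree_derivative_lt hp0
  rw [splits_iff_card_roots.mp hp] at hroots
  omega

theorem Splits.iterate_derivative {p : ℝ[X]} (hp : p.Splits) (k : ℕ) :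
    (Polynomial.derivative^[k] p).Splits := by
  induction k with
  | zero => exact hp
  | succ k ih => rw [Function.iterate_succ_apply']; exact ih.derivative

theorem Splits.discrim_nonneg {p : ℝ[X]} (hp : p.Splits) (hdeg : p.natDegree ≤ 2) :
    0 ≤ discrim (p.coeff 2) (p.coeff 1) (p.coeff 0) := by
  by_cases h2 : p.coeff 2 = 0
  · rw [discrim, h2, mul_zero, zero_mul, sub_zero]
    positivity
  have hdeg2 : p.natDegree = 2 := le_antisymm hdeg (le_natDegree_of_ne_zero h2)
  obtain ⟨x, hx⟩ := hp.exists_eval_eq_zero (natDegree_pos_iff_degree_pos.mp (by omega)).ne'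
  rw [eval_eq_sum_range, hdeg2] at hx
  simp only [Finset.sum_range_succ, Finset.sum_range_zero] at hx
  rw [discrim_eq_sq_of_quadratic_eq_zero (x := x) (by linear_combination hx)]
  positivity

end Polynomial

namespace Multiset

theorem esymm_mul_esymm_le_of_card_eq_add_two {s : Multiset ℝ} {r : ℕ}
    (hs : card s = r + 2) :
    2 * ((r : ℝ) + 2) * (s.esymm r * s.esymm (r + 2)) ≤ (r + 1) * s.esymm (r + 1) ^ 2 := by
  set f := (s.map fun a => C a * X + 1).prod
  have hcoeff (j : ℕ) :
      (derivative^[r] f).coeff j = ((r + j).descFactorial r : ℝ) * s.esymm (r + j) := by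
    rw [coeff_iterate_derivative, prod_C_mul_X_add_one_coeff, nsmul_eq_mul, add_comm j]
  have hsplit : f.Splits := Splits.multisetProd <| by
    simp only [Multiset.mem_map]
    rintro _ ⟨a, -, rfl⟩
    exact Splits.of_natDegree_le_one natDegree_linear_le
  have hdeg : (derivative^[r] f).natDegree ≤ 2 := by
    refine natDegree_le_iff_coeff_eq_zero.mpr fun j hj => ?_
    rw [hcoeff, esymm_eq_zero_of_card_lt (by rw [hs]; exact_mod_cast (by omega : r + 2 < r + j)),
      mul_zero]
  have hdisc := (hsplit.iterate_derivative r).discrim_nonneg hdeg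
  rw [discrim, hcoeff, hcoeff, hcoeff, add_zero, Nat.descFactorial_self,
    Nat.add_one_descFactorial_self] at hdisc
  have h2 : 2 * ((r + 2).descFactorial r : ℝ) = (r + 2) * (r + 1) * r ! := by
    exact_mod_cast Nat.two_mul_add_two_descFactorial_self r
  have hF : (0 : ℝ) < (r + 1) * (r ! : ℝ) ^ 2 := by positivity
  refine le_of_mul_le_mul_left ?_ hF
  push_cast at hdisc
  linear_combination hdisc - (2 * s.esymm (r + 2) * s.esymm r * r !) * h2

theorem esymm_mul_esymm_le_of_card_eq {s : Multiset ℝ} {r D : ℕ} (hs : card s = r + 2 + D) :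
    ((r : ℝ) + 2) * (D + 2) * (s.esymm r * s.esymm (r + 2)) ≤
      (r + 1) * (D + 1) * s.esymm (r + 1) ^ 2 := by
  set p := (s.map fun a => X + C a).prod
  set q := derivative^[D] p
  have hcoeff (i j : ℕ) (hij : i + j = r + 2) :
      q.coeff j = ((D + j).descFactorial D : ℝ) * s.esymm i := by
    rw [coeff_iterate_derivative, prod_X_add_C_coeff _ (by omega), nsmul_eq_mul, hs,
      show r + 2 + D - (j + D) = i by omega, add_comm j]
  have hsplit : q.Splits :=
    (Splits.multisetProd (by simp [Splits.X_add_C])).iterate_derivative D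
  have hdeg : q.natDegree = r + 2 := by
    refine le_antisymm ?_ (le_natDegree_of_ne_zero ?_)
    · have hp : p.natDegree = card s := by
        simp [p, natDegree_multiset_prod_of_monic, monic_X_add_C]
      exact (natDegree_iterate_derivative p D).trans (by omega)
    · rw [hcoeff 0 (r + 2) (zero_add _)]
      simp [Multiset.esymm, Nat.descFactorial_eq_zero_iff_lt]
  set u := q.roots.map Neg.neg
  have hu : card u = r + 2 := by rw [card_map, ← hdeg, splits_iff_card_roots.mp hsplit]
  have hvieta (i j : ℕ) (hij : i + j = r + 2) : q.coeff j = q.leadingCoeff * u.esymm i := by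
    rw [coeff_eq_esymm_roots_of_splits hsplit (by omega), esymm_neg, hdeg,
      show r + 2 - j = i by omega]
    ring
  have key := mul_le_mul_of_nonneg_left (esymm_mul_esymm_le_of_card_eq_add_two hu)
    (sq_nonneg q.leadingCoeff)
  have h0 := (hcoeff (r + 2) 0 rfl).symm.trans (hvieta (r + 2) 0 rfl)
  have h1 := (hcoeff (r + 1) 1 rfl).symm.trans (hvieta (r + 1) 1 rfl)
  have h2 := (hcoeff r 2 rfl).symm.trans (hvieta r 2 rfl)
  rw [add_zero, Nat.descFactorial_self] at h0
  rw [Nat.add_one_descFactorial_self] at h1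
  have hc2 : 2 * ((D + 2).descFactorial D : ℝ) = (D + 2) * (D + 1) * D ! := by
    exact_mod_cast Nat.two_mul_add_two_descFactorial_self D
  have hF : (0 : ℝ) < (D + 1) * (D ! : ℝ) ^ 2 := by positivity
  refine le_of_mul_le_mul_left ?_ hF
  push_cast at h1
  -- `key` is the case `card u = r + 2` scaled by `q.leadingCoeff ^ 2`, and by `h0`, `h1`, `h2`
  -- each `q.leadingCoeff * σᵢ(u)` is a factorial multiple of `σᵢ(s)`.
  linear_combination key + 2 * (r + 2) * D ! * s.esymm (r + 2) * h2
    + 2 * (r + 2) * q.leadingCoeff * u.esymm r * h0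
    - (r + 2) * s.esymm r * D ! * s.esymm (r + 2) * hc2
    - (r + 1) * ((D + 1) * D ! * s.esymm (r + 1) + q.leadingCoeff * u.esymm (r + 1)) * h1

theorem esymm_mul_esymm_le_sq (s : Multiset ℝ) (r : ℕ) :
    s.esymm r * s.esymm (r + 2) ≤ s.esymm (r + 1) ^ 2 := by
  by_cases hs : card s < r + 2
  · rw [esymm_eq_zero_of_card_lt hs, mul_zero]
    positivity
  obtain ⟨D, hD⟩ : ∃ D, card s = r + 2 + D := ⟨card s - (r + 2), by omega⟩
  have h := esymm_mul_esymm_le_of_card_eq hD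
  rcases le_or_gt (s.esymm r * s.esymm (r + 2)) 0 with hneg | hpos
  · exact hneg.trans (sq_nonneg _)
  have hconst : ((r : ℝ) + 1) * (D + 1) ≤ (r + 2) * (D + 2) := by gcongr <;> norm_num
  refine le_of_mul_le_mul_left ?_ (by positivity : (0 : ℝ) < (r + 1) * (D + 1))
  calc ((r : ℝ) + 1) * (D + 1) * (s.esymm r * s.esymm (r + 2))
      ≤ (r + 2) * (D + 2) * (s.esymm r * s.esymm (r + 2)) :=
        mul_le_mul_of_nonneg_right hconst hpos.le
    _ ≤ (r + 1) * (D + 1) * s.esymm (r + 1) ^ 2 := h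

def InGardingCone (k : ℕ) (s : Multiset ℝ) : Prop :=
  ∀ j ≤ k, 0 < s.esymm j

namespace InGardingCone

variable {k : ℕ} {s : Multiset ℝ}

theorem le_card (h : InGardingCone k s) : k ≤ card s := by
  by_contra! hk
  exact (h k le_rfl).ne' (esymm_eq_zero_of_card_lt hk)

theorem pos_of_forall_le (h : InGardingCone k s) (hk : 1 ≤ k) {a : ℝ} (ha : ∀ x ∈ s, x ≤ a) :
    0 < a := by
  have hsum : 0 < card s • a :=
    (h 1 hk).trans_le ((esymm_one_eq_sum s).trans_le (sum_le_card_nsmul s a ha))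
  rw [nsmul_eq_mul] at hsum
  exact pos_of_mul_pos_right hsum (Nat.cast_nonneg _)

theorem of_cons {a : ℝ} (h : InGardingCone (k + 1) (a ::ₘ s)) : InGardingCone k s := by
  intro j hj
  induction j with
  | zero => simp [Multiset.esymm]
  | succ j ih =>
    have hA := ih (by omega)
    have h1 := h (j + 1) (by omega)
    have h2 := h (j + 2) (by omega)
    rw [esymm_cons_succ] at h1 h2
    have hN := esymm_mul_esymm_le_sq s j
    by_contra! hB
    -- `σⱼ (σⱼ₊₂ + a σⱼ₊₁) - σⱼ₊₁ (σⱼ₊₁ + a σⱼ) = σⱼ σⱼ₊₂ - σⱼ₊₁² ≤ 0`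
    nlinarith [mul_pos hA h2, mul_nonneg h1.le (neg_nonneg.mpr hB)]

theorem prod_le_esymm {t u : Multiset ℝ} (h : InGardingCone k (t + u)) (htk : card t < k)
    (htu : ∀ x ∈ t, ∀ y ∈ u, y ≤ x) : t.prod ≤ (t + u).esymm (card t) := by
  induction hn : card t generalizing t k with
  | zero => simp [card_eq_zero.mp hn, Multiset.esymm]
  | succ n ih =>
    obtain ⟨a, ha, hmax⟩ := t.toFinset.exists_max_image id
      (toFinset_nonempty.mpr (card_pos.mp (by omega)))
    simp only [mem_toFinset, id] at ha hmax
    obtain ⟨t, rfl⟩ := exists_cons_of_mem ha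
    obtain ⟨k, rfl⟩ : ∃ k', k = k' + 1 := ⟨k - 1, by omega⟩
    rw [card_cons] at hn htk
    rw [cons_add] at h ⊢
    have hpos : 0 < a := h.pos_of_forall_le (by omega) fun x hx => by
      rcases mem_cons.mp hx with rfl | hx
      · exact le_rfl
      rcases mem_add.mp hx with hx | hx
      · exact hmax x (mem_cons_of_mem hx)
      · exact htu a ha x hx
    have hcone := h.of_cons
    have hIH : t.prod ≤ (t + u).esymm n :=
      ih hcone (by omega) (fun x hx => htu x (mem_cons_of_mem hx)) (by omega)
    rw [prod_cons, esymm_cons_succ]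
    linarith [hcone (n + 1) (by omega), mul_le_mul_of_nonneg_left hIH hpos.le]

end InGardingCone

end Multiset

theorem esymmOn_natCast {n : ℕ} (S : Finset (Fin n)) (j : ℕ) (lam : Fin n → ℝ) :
    esymmOn S j lam = (S.val.map lam).esymm j := by
  rw [esymmOn, if_neg (by omega), Int.toNat_natCast, Finset.esymm_map_val]

theorem GammaCone.inGardingCone {n k : ℕ} {lam : Fin n → ℝ} (h : GammaCone k lam) :
    (univ.val.map lam).InGardingCone k := by
  rintro (_ | j) hj
  · simp [Multiset.esymm]
  · have := h (j + 1) (by omega) hj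
    rwa [esymm, esymmOn_natCast] at this

theorem sigma_l_ge_prod_general {n : ℕ} (l k : ℕ) (hlk : l < k)
    (lam : Fin n → ℝ) (hG : GammaCone k lam) (hsort : Antitone lam) :
    esymm (l : ℤ) lam ≥ ∏ i ∈ Finset.univ.filter (fun i : Fin n => (i : ℕ) < l), lam i := by
  set T := univ.filter fun i : Fin n => (i : ℕ) < l
  set U := univ.filter fun i : Fin n => ¬ (i : ℕ) < l
  have hcone := hG.inGardingCone
  have hsplit : univ.val.map lam = T.val.map lam + U.val.map lam := by
    rw [← Multiset.map_add, filter_val, filter_val, Multiset.filter_add_not]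
  have hT : Multiset.card (T.val.map lam) = l := by
    have := hcone.le_card
    simp only [Multiset.card_map, card_val, card_univ, Fintype.card_fin] at this
    rw [Multiset.card_map, card_val, Fin.card_filter_val_lt]
    omega
  have hTU : ∀ x ∈ T.val.map lam, ∀ y ∈ U.val.map lam, y ≤ x := by
    simp only [Multiset.mem_map, mem_val, mem_filter, mem_univ, true_and, T, U]
    rintro _ ⟨i, hi, rfl⟩ _ ⟨j, hj, rfl⟩
    exact hsort (Fin.le_def.mpr (by omega))
  have key := (hsplit ▸ hcone).prod_le_esymm (hT ▸ hlk) hTU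
  rw [hT, ← hsplit] at key
  rwa [ge_iff_le, esymm, esymmOn_natCast, prod_eq_multiset_prod]

theorem sigma_l_ge_prod {n : ℕ} (l k : ℕ) (hl : 1 ≤ l) (hlk : l < k) (hkn : k ≤ n)
    (lam : Fin n → ℝ) (hG : GammaCone k lam) (hsort : Antitone lam) :
    esymm (l : ℤ) lam ≥ ∏ i ∈ Finset.univ.filter (fun i : Fin n => (i : ℕ) < l), lam i :=
  sigma_l_ge_prod_general l k hlk lam hG hsort
end

section
/- Let 1 ≤ k ≤ n and let λ = (λ_1,…,λ_n) ∈ Γ_k. Then Σ_{i=1}^n λ_i^2 σ_{k−1}(λ|i) ≥ (k/n) σ_1(λ) σ_k(λ). -/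
open Finset
open Polynomial

set_option linter.unusedSectionVars false
set_option maxHeartbeats 1000000

open Polynomial Finset

lemma deriv_esymm_step (s : Multiset ℝ) (hs : 1 ≤ Multiset.card s) :
    ∃ t : Multiset ℝ, Multiset.card t = Multiset.card s - 1 ∧
      ∀ j : ℕ, j ≤ Multiset.card s - 1 →
        (Multiset.card s : ℝ) * t.esymm j = ((Multiset.card s : ℝ) - j) * s.esymm j := by
  obtain ⟨N, hN⟩ : ∃ N, N = Multiset.card s := ⟨_, rfl⟩
  obtain ⟨f, hf⟩ : ∃ f : ℝ[X], f = (s.map fun a => X - C a).prod := ⟨_, rfl⟩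
  rw [← hN] at hs ⊢
  have hmonic : f.Monic := hf ▸ monic_multiset_prod_of_monic _ _ fun a _ => monic_X_sub_C a
  have hdeg : f.natDegree = N := by
    rw [hf, natDegree_multiset_prod_X_sub_C_eq_card, hN]
  have hroots : f.roots = s := hf ▸ roots_multiset_prod_X_sub_C s
  have hd1 : (derivative f).natDegree ≤ N - 1 := by
    have := natDegree_derivative_lt (p := f) (by omega)
    omega
  have hcard : N ≤ Multiset.card (derivative f).roots + 1 := by
    have := card_roots_le_derivative f
    rw [hroots, ← hN] at this; omega
  have hcard2 : Multiset.card (derivative f).roots ≤ (derivative f).natDegree := card_roots' _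
  have hrc : Multiset.card (derivative f).roots = N - 1 := by omega
  have hdeg' : (derivative f).natDegree = N - 1 := by omega
  have hlc : (derivative f).leadingCoeff = (N : ℝ) := by
    rw [leadingCoeff, hdeg', coeff_derivative]
    have e : N - 1 + 1 = N := by omega
    rw [e, ← hdeg, hmonic.coeff_natDegree, hdeg]
    push_cast [Nat.cast_sub hs]
    ring
  have hfact : C ((derivative f).leadingCoeff) *
      (Multiset.map (fun a => X - C a) (derivative f).roots).prod = derivative f :=
    C_leadingCoeff_mul_prod_multiset_X_sub_C (hrc.trans hdeg'.symm)
  refine ⟨(derivative f).roots, by omega, fun j hj => ?_⟩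
  have h1 : (derivative f).coeff (N - 1 - j) = f.coeff (N - j) * ((N : ℝ) - j) := by
    rw [coeff_derivative]
    have e1 : N - 1 - j + 1 = N - j := by omega
    have e2 : ((N - 1 - j : ℕ) : ℝ) + 1 = (N : ℝ) - j := by
      push_cast [Nat.cast_sub (by omega : j ≤ N - 1), Nat.cast_sub hs]; ring
    rw [e1, e2]
  have h2 : f.coeff (N - j) = (-1) ^ j * s.esymm j := by
    have h := Multiset.prod_X_sub_C_coeff s (k := N - j) (by omega)
    rw [← hf, ← hN] at h
    have e : N - (N - j) = j := by omega
    rw [h, e]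
  have h3 : (derivative f).coeff (N - 1 - j) = (N : ℝ) * ((-1) ^ j * (derivative f).roots.esymm j) := by
    conv_lhs => rw [← hfact]
    rw [coeff_C_mul, hlc]
    have h := Multiset.prod_X_sub_C_coeff (derivative f).roots (k := N - 1 - j) (by rw [hrc]; omega)
    rw [hrc] at h
    have e : N - 1 - (N - 1 - j) = j := by omega
    rw [h, e]
  have h4 : ((-1 : ℝ) ^ j) * ((-1 : ℝ) ^ j) = 1 := by
    rw [← pow_add]
    exact Even.neg_one_pow ⟨j, rfl⟩
  have h5 := h1.symm.trans h3
  rw [h2] at h5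
  linear_combination (-(-1:ℝ)^j) * h5 - ((N:ℝ) * (derivative f).roots.esymm j - ((N:ℝ) - j) * s.esymm j) * h4

open Finset

variable {α : Type*} [DecidableEq α]

lemma esum_insert (f : α → ℝ) {a : α} {S : Finset α} (ha : a ∉ S) (k : ℕ) :
    ∑ A ∈ (insert a S).powersetCard (k+1), ∏ i ∈ A, f i
      = (∑ A ∈ S.powersetCard (k+1), ∏ i ∈ A, f i)
        + f a * ∑ A ∈ S.powersetCard k, ∏ i ∈ A, f i := by
  rw [Finset.powersetCard_succ_insert ha, Finset.sum_union, Finset.sum_image]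
  · congr 1
    rw [Finset.mul_sum]
    refine Finset.sum_congr rfl fun A hA => ?_
    exact Finset.prod_insert fun h => ha ((Finset.mem_powersetCard.1 hA).1 h)
  · intro A hA B hB hAB
    have hA' : a ∉ A := fun h => ha ((Finset.mem_powersetCard.1 hA).1 h)
    have hB' : a ∉ B := fun h => ha ((Finset.mem_powersetCard.1 hB).1 h)
    rw [← Finset.erase_insert hA', ← Finset.erase_insert hB', hAB]
  · rw [Finset.disjoint_left]
    intro A hA hA2
    obtain ⟨B, hB, rfl⟩ := Finset.mem_image.1 hA2
    exact ha ((Finset.mem_powersetCard.1 hA).1 (Finset.mem_insert_self a B))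

lemma pc1_sum (f : α → ℝ) (S : Finset α) :
    ∑ A ∈ S.powersetCard 1, ∏ i ∈ A, f i = ∑ i ∈ S, f i := by
  rw [Finset.powersetCard_one, Finset.sum_map]
  simp

lemma sq_sum_pc2 (f : α → ℝ) (S : Finset α) :
    (∑ i ∈ S, f i) ^ 2
      = ∑ i ∈ S, f i ^ 2 + 2 * ∑ A ∈ S.powersetCard 2, ∏ i ∈ A, f i := by
  induction S using Finset.induction with
  | empty =>
    rw [show ((∅:Finset α).powersetCard 2) = ∅ by
      rw [Finset.powersetCard_eq_empty]; simp]
    simp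
  | @insert a S ha ih =>
    rw [Finset.sum_insert ha, Finset.sum_insert ha,
      show (2:ℕ) = 1 + 1 from rfl, esum_insert f ha 1, pc1_sum]
    linear_combination ih

open Finset

lemma compl_sum {α : Type*} [DecidableEq α] [Fintype α] (g : Finset α → ℝ) (j : ℕ)
    (hj : j ≤ Fintype.card α) :
    ∑ A ∈ (univ : Finset α).powersetCard (Fintype.card α - j), g Aᶜ
      = ∑ B ∈ (univ : Finset α).powersetCard j, g B := by
  refine Finset.sum_nbij' (fun A => Aᶜ) (fun B => Bᶜ) ?_ ?_ ?_ ?_ ?_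
  · intro A hA
    rw [Finset.mem_powersetCard] at hA ⊢
    refine ⟨Finset.subset_univ _, ?_⟩
    rw [Finset.card_compl, hA.2]
    omega
  · intro B hB
    rw [Finset.mem_powersetCard] at hB ⊢
    refine ⟨Finset.subset_univ _, ?_⟩
    rw [Finset.card_compl, hB.2]
  · intro A _; exact compl_compl A
  · intro B _; exact compl_compl B
  · intro A _; rfl

lemma pair_prod {n : ℕ} (lam : Fin n → ℝ) {B : Finset (Fin n)}
    (hB : B ∈ (univ : Finset (Fin n)).powersetCard 2) :
    (∏ i, lam i) * ∏ j ∈ Bᶜ, lam j = ∏ i ∈ B, (∏ j ∈ ({i}ᶜ : Finset (Fin n)), lam j) := by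
  obtain ⟨x, y, hxy, rfl⟩ := Finset.card_eq_two.1 (Finset.mem_powersetCard.1 hB).2
  rw [Finset.prod_pair hxy]
  have h1 : insert x ({x, y}ᶜ : Finset (Fin n)) = ({y}ᶜ : Finset (Fin n)) := by
    ext z
    simp only [Finset.mem_insert, Finset.mem_compl, Finset.mem_singleton, Finset.mem_insert,
      not_or]
    constructor
    · rintro (rfl | ⟨-, h⟩)
      · exact hxy
      · exact h
    · intro h
      by_cases hzx : z = x
      · exact Or.inl hzx
      · exact Or.inr ⟨hzx, h⟩
  have h2 : insert x ({x}ᶜ : Finset (Fin n)) = univ := by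
    ext z
    simp only [Finset.mem_insert, Finset.mem_compl, Finset.mem_singleton, Finset.mem_univ,
      iff_true]
    tauto
  have hx1 : x ∉ ({x, y}ᶜ : Finset (Fin n)) := by simp
  have hx2 : x ∉ ({x}ᶜ : Finset (Fin n)) := by simp
  have e1 : ∏ j ∈ ({y}ᶜ : Finset (Fin n)), lam j = lam x * ∏ j ∈ ({x, y}ᶜ : Finset (Fin n)), lam j := by
    rw [← h1, Finset.prod_insert hx1]
  have e2 : ∏ i, lam i = lam x * ∏ j ∈ ({x}ᶜ : Finset (Fin n)), lam j := by
    rw [← h2, Finset.prod_insert hx2]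
  rw [e1, e2]
  ring


lemma newton_top_fin {n : ℕ} (hn : 2 ≤ n) (lam : Fin n → ℝ) :
    (∑ A ∈ (univ : Finset (Fin n)).powersetCard (n-2), ∏ i ∈ A, lam i)
      * (∑ A ∈ (univ : Finset (Fin n)).powersetCard n, ∏ i ∈ A, lam i) * (n:ℝ)^2
    ≤ (∑ A ∈ (univ : Finset (Fin n)).powersetCard (n-1), ∏ i ∈ A, lam i)^2
        * (n.choose 2 : ℝ) := by
  have hP : ∑ A ∈ (univ : Finset (Fin n)).powersetCard n, ∏ i ∈ A, lam i = ∏ i, lam i := by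
    have h := Finset.powersetCard_self (univ : Finset (Fin n))
    rw [show #(univ : Finset (Fin n)) = n by simp] at h
    rw [h, Finset.sum_singleton]
  have T1 : ∑ A ∈ (univ : Finset (Fin n)).powersetCard (n-1), ∏ i ∈ A, lam i
      = ∑ i, ∏ j ∈ ({i}ᶜ : Finset (Fin n)), lam j := by
    have h := compl_sum (α := Fin n) (fun B => ∏ j ∈ Bᶜ, lam j) 1 (by simp; omega)
    rw [Fintype.card_fin] at h
    calc ∑ A ∈ (univ : Finset (Fin n)).powersetCard (n-1), ∏ i ∈ A, lam i
        = ∑ A ∈ (univ : Finset (Fin n)).powersetCard (n-1), ∏ j ∈ Aᶜᶜ, lam j := by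
          refine Finset.sum_congr rfl fun A _ => ?_; rw [compl_compl]
      _ = ∑ B ∈ (univ : Finset (Fin n)).powersetCard 1, ∏ j ∈ Bᶜ, lam j := h
      _ = ∑ i, ∏ j ∈ ({i}ᶜ : Finset (Fin n)), lam j := by
          rw [Finset.powersetCard_one, Finset.sum_map]; rfl
  have T2 : (∑ A ∈ (univ : Finset (Fin n)).powersetCard (n-2), ∏ i ∈ A, lam i)
      * (∑ A ∈ (univ : Finset (Fin n)).powersetCard n, ∏ i ∈ A, lam i)
      = ∑ B ∈ (univ : Finset (Fin n)).powersetCard 2,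
          ∏ i ∈ B, (∏ j ∈ ({i}ᶜ : Finset (Fin n)), lam j) := by
    have h := compl_sum (α := Fin n) (fun B => (∏ i, lam i) * ∏ j ∈ Bᶜ, lam j) 2 (by simp; omega)
    rw [Fintype.card_fin] at h
    calc (∑ A ∈ (univ : Finset (Fin n)).powersetCard (n-2), ∏ i ∈ A, lam i)
        * (∑ A ∈ (univ : Finset (Fin n)).powersetCard n, ∏ i ∈ A, lam i)
        = ∑ A ∈ (univ : Finset (Fin n)).powersetCard (n-2),
            (∏ i, lam i) * ∏ j ∈ Aᶜᶜ, lam j := by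
          rw [hP, mul_comm, Finset.mul_sum]
          refine Finset.sum_congr rfl fun A _ => ?_; rw [compl_compl]
      _ = ∑ B ∈ (univ : Finset (Fin n)).powersetCard 2, (∏ i, lam i) * ∏ j ∈ Bᶜ, lam j := h
      _ = ∑ B ∈ (univ : Finset (Fin n)).powersetCard 2,
            ∏ i ∈ B, (∏ j ∈ ({i}ᶜ : Finset (Fin n)), lam j) := by
          refine Finset.sum_congr rfl fun B hB => pair_prod lam hB
  set a : Fin n → ℝ := fun i => ∏ j ∈ ({i}ᶜ : Finset (Fin n)), lam j with ha
  have hsq := sq_sum_pc2 a (univ : Finset (Fin n))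
  have hcs : (∑ i, a i)^2 ≤ (n:ℝ) * ∑ i, a i ^ 2 := by
    have h := sq_sum_le_card_mul_sum_sq (s := (univ : Finset (Fin n))) (f := a)
    rwa [Finset.card_univ, Fintype.card_fin] at h
  have hc2 : (n.choose 2 : ℝ) * 2 = (n:ℝ) * ((n:ℝ) - 1) := by
    have h1 : n.choose 2 * 2 = n * (n - 1) := by
      obtain ⟨m, rfl⟩ : ∃ m, n = m + 2 := ⟨n - 2, by omega⟩
      have hh := Nat.add_one_mul_choose_eq (m+1) 1
      rw [Nat.choose_one_right] at hh
      have hhh : ((m+2) * (m+1) : ℕ) = ((m+2).choose 2 * 2 : ℕ) := hh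
      rw [show m+2-1 = m+1 from rfl]
      omega
    have h2 := congrArg (Nat.cast (R:=ℝ)) h1
    push_cast [Nat.cast_sub (by omega : 1 ≤ n)] at h2
    linarith
  rw [T1, T2]
  nlinarith [hsq, hcs, hc2, mul_le_mul_of_nonneg_left hcs (show (0:ℝ) ≤ (n:ℝ) by positivity)]

open Finset

lemma exists_fin_rep (s : Multiset ℝ) : ∃ lam : Fin (Multiset.card s) → ℝ,
    Multiset.map lam (univ : Finset (Fin (Multiset.card s))).val = s := by
  obtain ⟨L, rfl⟩ : ∃ L : List ℝ, ↑L = s := ⟨s.toList, Multiset.coe_toList s⟩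
  refine ⟨fun i => L.get (Fin.cast (by simp) i), ?_⟩
  rw [show ((univ : Finset (Fin (Multiset.card (L : Multiset ℝ)))).val)
      = ((List.finRange (Multiset.card (L : Multiset ℝ))) : Multiset (Fin _)) from rfl,
    Multiset.map_coe]
  exact congrArg _ (List.map_get_finRange L)

open Finset

lemma newton_base (r n : ℕ) (hn : n = r + 2) (lam : Fin n → ℝ) :
    (∑ A ∈ (univ : Finset (Fin n)).powersetCard r, ∏ i ∈ A, lam i)
      * (∑ A ∈ (univ : Finset (Fin n)).powersetCard (r+2), ∏ i ∈ A, lam i)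
      * (((r+2).choose (r+1) : ℝ))^2
    ≤ (∑ A ∈ (univ : Finset (Fin n)).powersetCard (r+1), ∏ i ∈ A, lam i)^2
      * (((r+2).choose r : ℝ) * ((r+2).choose (r+2) : ℝ)) := by
  subst hn
  have h := newton_top_fin (n := r+2) (by omega) lam
  have e1 : r + 2 - 2 = r := by omega
  have e2 : r + 2 - 1 = r + 1 := by omega
  rw [e1, e2] at h
  have c1 : (r+2).choose (r+1) = r+2 := Nat.choose_succ_self_right (r+1)
  have c2 : (r+2).choose r = (r+2).choose 2 := by
    have hsymm := Nat.choose_symm (by omega : 2 ≤ r + 2)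
    rwa [e1] at hsymm
  have c3 : (r+2).choose (r+2) = 1 := Nat.choose_self _
  rw [c1, c2, c3]
  push_cast
  push_cast at h
  nlinarith [h]

lemma newton_multiset (r : ℕ) :
    ∀ N : ℕ, r + 2 ≤ N → ∀ s : Multiset ℝ, Multiset.card s = N →
    s.esymm r * s.esymm (r+2) * ((N.choose (r+1) : ℝ))^2
      ≤ (s.esymm (r+1))^2 * ((N.choose r : ℝ) * (N.choose (r+2) : ℝ)) := by
  refine Nat.le_induction ?_ ?_
  · -- base : N = r + 2
    intro s hcs
    obtain ⟨lam, hlam⟩ := exists_fin_rep s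
    have he : ∀ j, s.esymm j = ∑ A ∈ (univ : Finset (Fin (Multiset.card s))).powersetCard j,
        ∏ i ∈ A, lam i := by
      intro j
      conv_lhs => rw [← hlam]
      exact Finset.esymm_map_val lam univ j
    rw [he r, he (r+1), he (r+2)]
    exact newton_base r (Multiset.card s) hcs lam
  · -- step
    intro N hN IH s hcs
    obtain ⟨t, hct, hrel⟩ := deriv_esymm_step s (by omega)
    rw [hcs] at hrel hct
    have hct' : Multiset.card t = N := by omega
    have IHt := IH t hct'
    have key : ∀ j, j ≤ N →
        ((N:ℝ)+1) * t.esymm j = ((N + 1 - j : ℕ) : ℝ) * s.esymm j := by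
      intro j hj
      have h5 := hrel j (by omega)
      have h0 : ((N + 1 - j : ℕ) : ℝ) = ((N:ℝ) + 1) - j := by
        rw [Nat.cast_sub (by omega : j ≤ N + 1)]
        push_cast; ring
      rw [h0]
      push_cast at h5
      linarith
    have ckey : ∀ j, j ≤ N →
        ((N:ℝ)+1) * ((N.choose j : ℕ) : ℝ) = ((N + 1 - j : ℕ) : ℝ) * (((N+1).choose j : ℕ) : ℝ) := by
      intro j hj
      have h1 : (N+1) * N.choose j = (N+1).choose (j+1) * (j+1) := Nat.add_one_mul_choose_eq N j
      have h2 : (N+1).choose (j+1) * (j+1) = (N+1).choose j * (N + 1 - j) :=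
        Nat.choose_succ_right_eq (N+1) j
      have h3 : (N+1) * N.choose j = (N + 1 - j) * (N+1).choose j :=
        (h1.trans h2).trans (Nat.mul_comm _ _)
      exact_mod_cast congrArg (Nat.cast (R := ℝ)) h3
    set M : ℝ := (N:ℝ) + 1 with hM
    have hMcast : ((N+1 : ℕ) : ℝ) = M := by push_cast [hM]; ring
    set a := s.esymm r; set b := s.esymm (r+1); set d := s.esymm (r+2)
    set a' := t.esymm r; set b' := t.esymm (r+1); set d' := t.esymm (r+2)
    set X : ℝ := (N.choose (r+1) : ℝ); set Y : ℝ := (N.choose r : ℝ); set Z : ℝ := (N.choose (r+2) : ℝ)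
    set X' : ℝ := ((N+1).choose (r+1) : ℝ); set Y' : ℝ := ((N+1).choose r : ℝ)
    set Z' : ℝ := ((N+1).choose (r+2) : ℝ)
    set u : ℝ := ((N + 1 - r : ℕ) : ℝ); set v : ℝ := ((N + 1 - (r+1) : ℕ) : ℝ)
    set w : ℝ := ((N + 1 - (r+2) : ℕ) : ℝ)
    have ha : M * a' = u * a := key r (by omega)
    have hb : M * b' = v * b := key (r+1) (by omega)
    have hd : M * d' = w * d := key (r+2) (by omega)
    have hX : M * X = v * X' := ckey (r+1) (by omega)
    have hY : M * Y = u * Y' := ckey r (by omega)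
    have hZ : M * Z = w * Z' := ckey (r+2) (by omega)
    have hupos : (0:ℝ) < u := by
      have : 0 < N + 1 - r := by omega
      exact_mod_cast Nat.cast_pos.2 this
    have hvpos : (0:ℝ) < v := by
      have : 0 < N + 1 - (r+1) := by omega
      exact_mod_cast Nat.cast_pos.2 this
    have hwpos : (0:ℝ) < w := by
      have : 0 < N + 1 - (r+2) := by omega
      exact_mod_cast Nat.cast_pos.2 this
    have hMpos : (0:ℝ) < M := by positivity
    have main : (u * v^2 * w) * (a * d * X'^2) ≤ (u * v^2 * w) * (b^2 * (Y' * Z')) := by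
      calc (u * v^2 * w) * (a * d * X'^2)
          = (u * a) * (w * d) * (v * X')^2 := by ring
        _ = (M * a') * (M * d') * (M * X)^2 := by rw [ha, hd, hX]
        _ = M^4 * (a' * d' * X^2) := by ring
        _ ≤ M^4 * (b'^2 * (Y * Z)) := by
            apply mul_le_mul_of_nonneg_left IHt (by positivity)
        _ = (M * b')^2 * ((M * Y) * (M * Z)) := by ring
        _ = (v * b)^2 * ((u * Y') * (w * Z')) := by rw [hb, hY, hZ]
        _ = (u * v^2 * w) * (b^2 * (Y' * Z')) := by ring
    have := le_of_mul_le_mul_left main (by positivity : (0:ℝ) < u * v^2 * w)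
    exact this

open Finset


lemma L3 {n : ℕ} (lam : Fin n → ℝ) (k : ℕ) :
    ∑ i : Fin n, lam i * ∑ A ∈ ({i}ᶜ : Finset (Fin n)).powersetCard k, ∏ j ∈ A, lam j
      = ((k:ℝ)+1) * ∑ B ∈ (univ : Finset (Fin n)).powersetCard (k+1), ∏ j ∈ B, lam j := by
  have step1 : ∑ i : Fin n, lam i * ∑ A ∈ ({i}ᶜ : Finset (Fin n)).powersetCard k, ∏ j ∈ A, lam j
      = ∑ i : Fin n, ∑ A ∈ ({i}ᶜ : Finset (Fin n)).powersetCard k, lam i * ∏ j ∈ A, lam j := by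
    refine Finset.sum_congr rfl fun i _ => Finset.mul_sum _ _ _
  rw [step1, Finset.sum_sigma' univ (fun i => ({i}ᶜ : Finset (Fin n)).powersetCard k)
      (fun i A => lam i * ∏ j ∈ A, lam j)]
  have hbij : ∑ p ∈ (univ : Finset (Fin n)).sigma
        (fun i => ({i}ᶜ : Finset (Fin n)).powersetCard k),
        lam p.1 * ∏ j ∈ p.2, lam j
      = ∑ p ∈ ((univ : Finset (Fin n)).powersetCard (k+1)).sigma (fun B => B),
        lam p.2 * ∏ j ∈ p.1.erase p.2, lam j := by
    refine Finset.sum_nbij' (fun p => ⟨insert p.1 p.2, p.1⟩) (fun p => ⟨p.2, p.1.erase p.2⟩)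
      ?_ ?_ ?_ ?_ ?_
    · rintro ⟨i, A⟩ hp
      rw [Finset.mem_sigma] at hp ⊢
      obtain ⟨-, hA⟩ := hp
      rw [Finset.mem_powersetCard] at hA
      have hiA : i ∉ A := fun h => by simpa using hA.1 h
      exact ⟨Finset.mem_powersetCard.2 ⟨Finset.subset_univ _,
        by rw [Finset.card_insert_of_notMem hiA, hA.2]⟩, Finset.mem_insert_self _ _⟩
    · rintro ⟨B, i⟩ hp
      rw [Finset.mem_sigma] at hp ⊢
      obtain ⟨hB, hi⟩ := hp
      rw [Finset.mem_powersetCard] at hB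
      refine ⟨Finset.mem_univ _, Finset.mem_powersetCard.2 ⟨?_, ?_⟩⟩
      · intro x hx
        rw [Finset.mem_compl, Finset.mem_singleton]
        exact Finset.ne_of_mem_erase hx
      · rw [Finset.card_erase_of_mem hi, hB.2]
        omega

    · rintro ⟨i, A⟩ hp
      rw [Finset.mem_sigma] at hp
      have hiA : i ∉ A := fun h => by
        have := (Finset.mem_powersetCard.1 hp.2).1 h
        simpa using this
      simp only [Finset.erase_insert hiA]
    · rintro ⟨B, i⟩ hp
      rw [Finset.mem_sigma] at hp
      simp only [Finset.insert_erase hp.2]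
    · rintro ⟨i, A⟩ hp
      rw [Finset.mem_sigma] at hp
      have hiA : i ∉ A := fun h => by
        have := (Finset.mem_powersetCard.1 hp.2).1 h
        simpa using this
      simp only [Finset.erase_insert hiA]
  rw [hbij, Finset.sum_sigma]
  have inner : ∀ B ∈ (univ : Finset (Fin n)).powersetCard (k+1),
      ∑ i ∈ B, lam i * ∏ j ∈ B.erase i, lam j = ((k:ℝ)+1) * ∏ j ∈ B, lam j := by
    intro B hB
    have hcard := (Finset.mem_powersetCard.1 hB).2
    have : ∀ i ∈ B, lam i * ∏ j ∈ B.erase i, lam j = ∏ j ∈ B, lam j :=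
      fun i hi => Finset.mul_prod_erase B lam hi
    rw [Finset.sum_congr rfl this, Finset.sum_const, hcard, nsmul_eq_mul]
    push_cast
    ring
  rw [Finset.sum_congr rfl inner, ← Finset.mul_sum]

open Finset

lemma chain_lemma (P : ℕ → ℝ) (k n : ℕ) (hk1 : 1 ≤ k) (hkn : k + 1 ≤ n)
    (hP0 : P 0 = 1) (hpos : ∀ j, 1 ≤ j → j ≤ k → 0 < P j)
    (hnewton : ∀ r, r + 2 ≤ n → P r * P (r+2) ≤ P (r+1)^2) :
    P (k+1) ≤ P 1 * P k := by
  have main : ∀ j, 1 ≤ j → j ≤ k → P (j+1) ≤ P 1 * P j := by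
    refine Nat.le_induction ?_ ?_
    · intro h1
      have h := hnewton 0 (by omega)
      rw [hP0, one_mul] at h
      nlinarith [h]
    · intro j hj IH hjk
      have hIH := IH (by omega)
      have hnew := hnewton j (by omega)
      have hpj : 0 < P j := hpos j hj (by omega)
      have hpj1 : 0 < P (j+1) := hpos (j+1) (by omega) hjk
      have hp1 : 0 < P 1 := hpos 1 le_rfl (by omega)
      nlinarith [hIH, hnew, hpj, hpj1, hp1]
  exact main k hk1 le_rfl

open Finset

theorem sum_sq_sigma_km1_ge {n : ℕ} (k : ℕ) (hk1 : 1 ≤ k) (hkn : k ≤ n)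
    (lam : Fin n → ℝ) (hG : GammaCone k lam) :
    ∑ i : Fin n, (lam i) ^ 2 * esymmOn ({i}ᶜ : Finset (Fin n)) ((k : ℤ) - 1) lam
      ≥ (k : ℝ) / n * esymm 1 lam * esymm (k : ℤ) lam := by
  classical
  have hn1 : 1 ≤ n := le_trans hk1 hkn
  -- E j notation
  have hesymm : ∀ j : ℕ, esymm (j:ℤ) lam
      = ∑ A ∈ (univ : Finset (Fin n)).powersetCard j, ∏ i ∈ A, lam i := by
    intro j
    rw [esymm, esymmOn, if_neg (by omega : ¬ (j:ℤ) < 0), Int.toNat_natCast]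
  have hOn : ∀ i : Fin n, esymmOn ({i}ᶜ : Finset (Fin n)) ((k:ℤ)-1) lam
      = ∑ A ∈ ({i}ᶜ : Finset (Fin n)).powersetCard (k-1), ∏ j ∈ A, lam j := by
    intro i
    rw [esymmOn, if_neg (by omega : ¬ ((k:ℤ)-1) < 0)]
    have : ((k:ℤ)-1).toNat = k - 1 := by omega
    rw [this]
  -- L2
  have L2 : ∀ (i : Fin n) (m : ℕ),
      ∑ A ∈ (univ : Finset (Fin n)).powersetCard (m+1), ∏ j ∈ A, lam j
        = (∑ A ∈ ({i}ᶜ : Finset (Fin n)).powersetCard (m+1), ∏ j ∈ A, lam j)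
          + lam i * ∑ A ∈ ({i}ᶜ : Finset (Fin n)).powersetCard m, ∏ j ∈ A, lam j := by
    intro i m
    have hins : insert i ({i}ᶜ : Finset (Fin n)) = univ := by
      ext z; simp [eq_or_ne z i]
    have hnm : i ∉ ({i}ᶜ : Finset (Fin n)) := by simp
    rw [← hins]
    exact esum_insert lam hnm m
  -- L4
  have L4 : ∑ i : Fin n, (lam i) ^ 2 * ∑ A ∈ ({i}ᶜ : Finset (Fin n)).powersetCard (k-1), ∏ j ∈ A, lam j
      = (∑ i, lam i) * (∑ A ∈ (univ : Finset (Fin n)).powersetCard k, ∏ j ∈ A, lam j)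
        - ((k:ℝ)+1) * ∑ B ∈ (univ : Finset (Fin n)).powersetCard (k+1), ∏ j ∈ B, lam j := by
    have hterm : ∀ i : Fin n,
        (lam i) ^ 2 * ∑ A ∈ ({i}ᶜ : Finset (Fin n)).powersetCard (k-1), ∏ j ∈ A, lam j
        = lam i * (∑ A ∈ (univ : Finset (Fin n)).powersetCard k, ∏ j ∈ A, lam j)
          - lam i * ∑ A ∈ ({i}ᶜ : Finset (Fin n)).powersetCard k, ∏ j ∈ A, lam j := by
      intro i
      have h2 := L2 i (k-1)
      rw [show k - 1 + 1 = k by omega] at h2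
      rw [h2]
      ring
    rw [Finset.sum_congr rfl fun i _ => hterm i, Finset.sum_sub_distrib, ← Finset.sum_mul, L3 lam k]
  have h1' : esymm 1 lam = ∑ i, lam i := by
    rw [show (1:ℤ) = ((1:ℕ):ℤ) by norm_num, hesymm 1, pc1_sum]
  rw [Finset.sum_congr rfl fun i _ => congrArg _ (hOn i), L4, hesymm k, h1']
  -- abbreviations
  have hE0 : (∑ A ∈ (univ : Finset (Fin n)).powersetCard 0, ∏ j ∈ A, lam j) = 1 := by
    rw [Finset.powersetCard_zero, Finset.sum_singleton, Finset.prod_empty]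
  have hEpos : ∀ j, 1 ≤ j → j ≤ k →
      0 < ∑ A ∈ (univ : Finset (Fin n)).powersetCard j, ∏ i ∈ A, lam i := by
    intro j hj1 hj2
    have := hG j hj1 hj2
    rwa [hesymm j] at this
  rcases eq_or_lt_of_le hkn with hkeq | hklt
  · -- k = n : the (k+1)-st esymm vanishes and k/n = 1
    have hz : ∑ B ∈ (univ : Finset (Fin n)).powersetCard (k+1), ∏ j ∈ B, lam j = 0 := by
      rw [Finset.powersetCard_eq_empty.2 (by simp [← hkeq]), Finset.sum_empty]
    rw [hz]
    have : (k:ℝ)/n = 1 := by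
      rw [hkeq]; exact div_self (by positivity)
    rw [this]
    ring_nf
    exact le_refl _
  · -- k < n
    have hcard : Multiset.card (Multiset.map lam (univ : Finset (Fin n)).val) = n := by simp
    have hes : ∀ j, (Multiset.map lam (univ : Finset (Fin n)).val).esymm j
        = ∑ A ∈ (univ : Finset (Fin n)).powersetCard j, ∏ i ∈ A, lam i :=
      fun j => Finset.esymm_map_val lam univ j
    have hchoosepos : ∀ j, j ≤ n → (0:ℝ) < (n.choose j : ℝ) := by
      intro j hj
      exact_mod_cast Nat.cast_pos.2 (Nat.choose_pos hj)
    set P : ℕ → ℝ := fun j =>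
      (∑ A ∈ (univ : Finset (Fin n)).powersetCard j, ∏ i ∈ A, lam i) / (n.choose j : ℝ)
      with hPdef
    have hP0 : P 0 = 1 := by
      rw [hPdef]; simp [hE0]
    have hposP : ∀ j, 1 ≤ j → j ≤ k → 0 < P j := by
      intro j h1 h2
      rw [hPdef]
      exact div_pos (hEpos j h1 h2) (hchoosepos j (by omega))
    have hnewtonP : ∀ r, r + 2 ≤ n → P r * P (r+2) ≤ P (r+1)^2 := by
      intro r hr
      have h := newton_multiset r n hr (Multiset.map lam (univ : Finset (Fin n)).val) hcard
      rw [hes r, hes (r+1), hes (r+2)] at h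
      rw [hPdef]
      simp only []
      rw [div_mul_div_comm, div_pow, div_le_div_iff₀
        (mul_pos (hchoosepos r (by omega)) (hchoosepos (r+2) (by omega))) (pow_pos (hchoosepos (r+1) (by omega)) 2)]
      exact h
    have hn0 : (0:ℝ) < n := by exact_mod_cast Nat.cast_pos.2 (by omega : 0 < n)
    have hchain := chain_lemma P k n hk1 (by omega) hP0 hposP hnewtonP
    -- unfold the chain inequality
    rw [hPdef] at hchain
    simp only [Nat.choose_one_right] at hchain
    rw [div_mul_div_comm, div_le_div_iff₀ (hchoosepos (k+1) (by omega))
      (mul_pos hn0 (hchoosepos k (by omega)))] at hchain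
    rw [pc1_sum lam univ] at hchain
    -- hchain : E(k+1) * (n * C(n,k)) ≤ E1 * Ek * C(n,k+1)
    have h2 : ((n.choose (k+1) : ℝ)) * ((k:ℝ)+1) = (n.choose k : ℝ) * ((n:ℝ) - k) := by
      have hnat : n.choose (k+1) * (k+1) = n.choose k * (n - k) := Nat.choose_succ_right_eq n k
      have := congrArg (Nat.cast (R := ℝ)) hnat
      push_cast [Nat.cast_sub hkn] at this
      linarith
    have hCkpos := hchoosepos k (by omega)
    have key : (n:ℝ) * (((k:ℝ)+1) * (∑ B ∈ (univ : Finset (Fin n)).powersetCard (k+1), ∏ j ∈ B, lam j))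
        ≤ ((n:ℝ) - k) * ((∑ i, lam i) * (∑ A ∈ (univ : Finset (Fin n)).powersetCard k, ∏ j ∈ A, lam j)) := by
      have h3 : (n.choose k : ℝ) * ((n:ℝ) * (((k:ℝ)+1) * (∑ B ∈ (univ : Finset (Fin n)).powersetCard (k+1), ∏ j ∈ B, lam j)))
          ≤ (n.choose k : ℝ) * (((n:ℝ) - k) * ((∑ i, lam i) * (∑ A ∈ (univ : Finset (Fin n)).powersetCard k, ∏ j ∈ A, lam j))) := by
        calc (n.choose k : ℝ) * ((n:ℝ) * (((k:ℝ)+1) * (∑ B ∈ (univ : Finset (Fin n)).powersetCard (k+1), ∏ j ∈ B, lam j)))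
            = ((∑ B ∈ (univ : Finset (Fin n)).powersetCard (k+1), ∏ j ∈ B, lam j)
                * ((n:ℝ) * (n.choose k : ℝ))) * ((k:ℝ)+1) := by ring
          _ ≤ ((∑ i, lam i) * (∑ A ∈ (univ : Finset (Fin n)).powersetCard k, ∏ j ∈ A, lam j)
                * (n.choose (k+1) : ℝ)) * ((k:ℝ)+1) := by
              apply mul_le_mul_of_nonneg_right hchain (by positivity)
          _ = ((n.choose (k+1) : ℝ) * ((k:ℝ)+1))
                * ((∑ i, lam i) * (∑ A ∈ (univ : Finset (Fin n)).powersetCard k, ∏ j ∈ A, lam j)) := by ring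
          _ = ((n.choose k : ℝ) * ((n:ℝ) - k))
                * ((∑ i, lam i) * (∑ A ∈ (univ : Finset (Fin n)).powersetCard k, ∏ j ∈ A, lam j)) := by rw [h2]
          _ = (n.choose k : ℝ) * (((n:ℝ) - k) * ((∑ i, lam i) * (∑ A ∈ (univ : Finset (Fin n)).powersetCard k, ∏ j ∈ A, lam j))) := by ring
      exact le_of_mul_le_mul_left h3 hCkpos
    rw [ge_iff_le, show (k:ℝ)/n * (∑ i, lam i) * (∑ A ∈ (univ : Finset (Fin n)).powersetCard k, ∏ i ∈ A, lam i)
      = ((k:ℝ) * ((∑ i, lam i) * (∑ A ∈ (univ : Finset (Fin n)).powersetCard k, ∏ i ∈ A, lam i))) / n by ring,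
      div_le_iff₀ hn0]
    nlinarith [key]
end
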